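/- If (a_i, b_j) ∈ N(A,B), then N(A∖{a_i}, B∖{b_j}) ⊆ N(A,B). -/
import Mathlib



/-- The `i`-th smallest element of `A` (0-based `i`), extended beyond `A.card`
by values larger than every element of `{1,…,n}`. -/
def enumExt (n : ℕ) (A : Finset ℕ) (i : ℕ) : ℕ :=
  if hi : i < A.card then A.orderEmbOfFin rfl ⟨i, hi⟩ else n + 1 + i

/-- The defining property of the shift `ℓ` in the definition of `N(A,B)`:
`a_{i+ℓ} > b_i` for all `i = 1,…,|A|−ℓ` (0-based here, the extension making the
out-of-range cases vacuously true for subsets of `{1,…,n}`). -/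
def ShiftOK (n : ℕ) (A B : Finset ℕ) (ℓ : ℕ) : Prop :=
  ∀ i < A.card, enumExt n B i < enumExt n A (i + ℓ)

open Classical in
/-- The minimal shift `ℓ` with `a_{i+ℓ} > b_i` for all `i ≤ |A|−ℓ`; minimality is
equivalent to the side condition `ℓ = 0` or `a_{j+ℓ−1} ≤ b_j` for some `j`. -/
noncomputable def ell (n : ℕ) (A B : Finset ℕ) : ℕ :=
  if h : ∃ ℓ, ShiftOK n A B ℓ then Nat.find h else 0

/-- The set `N(A,B) = {(a_{(i+ℓ) mod* m}, b_i) : i = 1,…,m}` (with `m = |A| = |B|`,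
`mod*` taking representatives in `{1,…,m}`): the longest diagonal of `M(A,B)` strictly
below the main diagonal of `X`, together with the complementary diagonal. -/
noncomputable def NAB (n : ℕ) (A B : Finset ℕ) : Finset (ℕ × ℕ) :=
  (Finset.range A.card).image
    (fun i => (enumExt n A ((i + ell n A B) % A.card), enumExt n B i))



lemma enumExt_mem {n : ℕ} {A : Finset ℕ} {i : ℕ} (hi : i < A.card) :
    enumExt n A i ∈ A := by
  simp only [enumExt, dif_pos hi]
  exact A.orderEmbOfFin_mem rfl _

lemma enumExt_le {n : ℕ} {A : Finset ℕ} (hAn : A ⊆ Finset.Icc 1 n) {i : ℕ}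
    (hi : i < A.card) : enumExt n A i ≤ n :=
  (Finset.mem_Icc.mp (hAn (enumExt_mem hi))).2

lemma enumExt_of_ge {n : ℕ} {A : Finset ℕ} {i : ℕ} (hi : A.card ≤ i) :
    enumExt n A i = n + 1 + i := by
  simp [enumExt, Nat.not_lt.mpr hi]

lemma enumExt_strictMono {n : ℕ} {A : Finset ℕ} (hAn : A ⊆ Finset.Icc 1 n) :
    StrictMono (enumExt n A) := by
  intro i j hij
  rcases lt_or_ge j A.card with hj | hj
  · have hi : i < A.card := hij.trans hj
    simpa only [enumExt, dif_pos hi, dif_pos hj] using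
      (A.orderEmbOfFin rfl).strictMono (show (⟨i, hi⟩ : Fin _) < ⟨j, hj⟩ from hij)
  · rw [enumExt_of_ge hj]
    rcases lt_or_ge i A.card with hi | hi
    · have := enumExt_le hAn hi; omega
    · rw [enumExt_of_ge hi]; omega

lemma card_erase_enum {n : ℕ} {A : Finset ℕ} {p : ℕ} (hp : p < A.card) :
    (A.erase (enumExt n A p)).card = A.card - 1 :=
  Finset.card_erase_of_mem (enumExt_mem hp)

lemma enumExt_erase {n : ℕ} {A : Finset ℕ} (hAn : A ⊆ Finset.Icc 1 n)
    {p : ℕ} (hp : p < A.card) {t : ℕ} (ht : t + 1 < A.card) :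
    enumExt n (A.erase (enumExt n A p)) t =
      if t < p then enumExt n A t else enumExt n A (t + 1) := by
  set A' := A.erase (enumExt n A p) with hA'
  have hcard : A'.card = A.card - 1 := card_erase_enum hp
  set f : Fin A'.card → ℕ := fun i =>
    if (i : ℕ) < p then enumExt n A i else enumExt n A (i + 1) with hf
  have hmono : StrictMono f := by
    intro i j hij
    have hij' : (i : ℕ) < (j : ℕ) := hij
    have hjc : (j : ℕ) < A.card - 1 := by have := j.isLt; omega
    have hs := enumExt_strictMono hAn
    simp only [hf]
    split_ifs with h1 h2 h2
    · exact hs hij'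
    · exact hs (by omega)
    · exact hs (by omega)
    · exact hs (by omega)
  have hfs : ∀ i, f i ∈ A' := by
    intro i
    have hic : (i : ℕ) < A.card - 1 := hcard ▸ i.isLt
    have hinj := (enumExt_strictMono hAn).injective
    simp only [hf]
    split_ifs with h1
    · exact Finset.mem_erase.mpr ⟨fun h => by have := hinj h; omega, enumExt_mem (by omega)⟩
    · exact Finset.mem_erase.mpr ⟨fun h => by have := hinj h; omega, enumExt_mem (by omega)⟩
  have := Finset.orderEmbOfFin_unique (rfl : A'.card = A'.card) hfs hmono
  have htc : t < A'.card := by omega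
  calc enumExt n A' t = A'.orderEmbOfFin rfl ⟨t, htc⟩ := by simp [enumExt, htc]
    _ = f ⟨t, htc⟩ := by rw [← this]
    _ = _ := rfl


lemma shiftOK_mono {n : ℕ} {A B : Finset ℕ} (hAn : A ⊆ Finset.Icc 1 n)
    {ℓ ℓ' : ℕ} (h : ℓ ≤ ℓ') (hs : ShiftOK n A B ℓ) : ShiftOK n A B ℓ' :=
  fun i hi => lt_of_lt_of_le (hs i hi) ((enumExt_strictMono hAn).monotone (by omega))

lemma shiftOK_card {n : ℕ} {A B : Finset ℕ} (hBn : B ⊆ Finset.Icc 1 n)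
    (hcards : B.card = A.card) : ShiftOK n A B A.card := by
  intro i hi
  have h1 : enumExt n B i ≤ n := enumExt_le hBn (by omega)
  have h2 : enumExt n A (i + A.card) = n + 1 + (i + A.card) := enumExt_of_ge (by omega)
  omega

lemma shiftOK_exists {n : ℕ} {A B : Finset ℕ} (hBn : B ⊆ Finset.Icc 1 n)
    (hcards : B.card = A.card) : ∃ ℓ, ShiftOK n A B ℓ :=
  ⟨A.card, shiftOK_card hBn hcards⟩

open Classical in
lemma ell_spec {n : ℕ} {A B : Finset ℕ} (hBn : B ⊆ Finset.Icc 1 n)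
    (hcards : B.card = A.card) : ShiftOK n A B (ell n A B) := by
  have h := shiftOK_exists hBn hcards
  rw [ell, dif_pos h]
  exact Nat.find_spec h

open Classical in
lemma ell_eq {n : ℕ} {A B : Finset ℕ} (hAn : A ⊆ Finset.Icc 1 n)
    {c : ℕ} (hc : ShiftOK n A B c) (hmin : c = 0 ∨ ¬ ShiftOK n A B (c - 1)) :
    ell n A B = c := by
  have h : ∃ ℓ, ShiftOK n A B ℓ := ⟨c, hc⟩
  rw [ell, dif_pos h]
  refine le_antisymm (Nat.find_le hc) ?_
  rcases hmin with rfl | hmin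
  · exact Nat.zero_le _
  · by_contra hlt
    push_neg at hlt
    exact hmin (shiftOK_mono hAn (by omega) (Nat.find_spec h))

lemma shiftOK_fail {n : ℕ} {A B : Finset ℕ} (hBn : B ⊆ Finset.Icc 1 n)
    (hcards : B.card = A.card) {ℓ : ℕ} (h : ¬ ShiftOK n A B ℓ) :
    ∃ i, i < A.card ∧ i + ℓ < A.card ∧ enumExt n A (i + ℓ) ≤ enumExt n B i := by
  simp only [ShiftOK, not_forall, not_lt, exists_prop] at h
  obtain ⟨i, hi, hle⟩ := h
  refine ⟨i, hi, ?_, hle⟩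
  have h1 : enumExt n B i ≤ n := enumExt_le hBn (by omega)
  by_contra hge
  rw [enumExt_of_ge (by omega)] at hle
  omega

lemma ell_le_card {n : ℕ} {A B : Finset ℕ} (hAn : A ⊆ Finset.Icc 1 n)
    (hBn : B ⊆ Finset.Icc 1 n) (hcards : B.card = A.card) : ell n A B ≤ A.card := by
  classical
  have h := shiftOK_exists hBn hcards
  rw [ell, dif_pos h]
  exact Nat.find_le (shiftOK_card hBn hcards)

lemma enumExt_erase_le {n : ℕ} {A : Finset ℕ} (hAn : A ⊆ Finset.Icc 1 n)
    {p : ℕ} (hp : p < A.card) (t : ℕ) :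
    enumExt n (A.erase (enumExt n A p)) t ≤ enumExt n A (t + 1) := by
  rcases lt_or_ge (t + 1) A.card with ht | ht
  · rw [enumExt_erase hAn hp ht]
    split_ifs with h
    · exact ((enumExt_strictMono hAn) (Nat.lt_succ_self t)).le
    · exact le_refl _
  · rw [enumExt_of_ge (show (A.erase (enumExt n A p)).card ≤ t by
      rw [card_erase_enum hp]; omega), enumExt_of_ge ht]
    omega

open Classical in
lemma ell_min {n : ℕ} {A B : Finset ℕ} (hBn : B ⊆ Finset.Icc 1 n)
    (hcards : B.card = A.card) {t : ℕ} (ht : t < ell n A B) : ¬ ShiftOK n A B t := by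
  have h := shiftOK_exists hBn hcards
  rw [ell, dif_pos h] at ht
  exact Nat.find_min h ht

/-- If `(a_i, b_j) ∈ N(A,B)`, then `N(A∖{a_i}, B∖{b_j}) ⊆ N(A,B)`. -/
theorem stmt_7 (n k : ℕ) (hk : 1 ≤ k) (hkn : k < n)
    (A B : Finset ℕ) (hAn : A ⊆ Finset.Icc 1 n) (hBn : B ⊆ Finset.Icc 1 n)
    (hA : A.card = k + 1) (hB : B.card = k + 1)
    (x y : ℕ) (hxy : (x, y) ∈ NAB n A B) :
    NAB n (A.erase x) (B.erase y) ⊆ NAB n A B := by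
  classical
  have hS : ShiftOK n A B (ell n A B) := ell_spec hBn (by omega)
  set ℓ := ell n A B with hℓdef
  have hℓm : ℓ ≤ A.card := ell_le_card hAn hBn (by omega)
  simp only [NAB, Finset.mem_image, Finset.mem_range] at hxy
  obtain ⟨j, hj, hxyeq⟩ := hxy
  rw [Prod.mk.injEq] at hxyeq
  obtain ⟨hx, hy⟩ := hxyeq
  set p := (j + ℓ) % A.card with hpdef
  have hp : p < A.card := Nat.mod_lt _ (by omega)
  have hxp : x = enumExt n A p := hx.symm
  have hyj : y = enumExt n B j := hy.symm
  have hcA' : (A.erase x).card = k := by rw [hxp, card_erase_enum hp]; omega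
  have hcB' : (B.erase y).card = k := by
    rw [hyj, card_erase_enum (show j < B.card by omega)]; omega
  have hAn' : A.erase x ⊆ Finset.Icc 1 n := (Finset.erase_subset _ _).trans hAn
  have hBn' : B.erase y ⊆ Finset.Icc 1 n := (Finset.erase_subset _ _).trans hBn
  have ea : ∀ t, t + 1 < A.card → enumExt n (A.erase x) t =
      if t < p then enumExt n A t else enumExt n A (t + 1) := by
    intro t ht; rw [hxp]; exact enumExt_erase hAn hp ht
  have eb : ∀ t, t + 1 < B.card → enumExt n (B.erase y) t =
      if t < j then enumExt n B t else enumExt n B (t + 1) := by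
    intro t ht; rw [hyj]; exact enumExt_erase hBn (by omega) ht
  have eaBig : ∀ t, k ≤ t → enumExt n (A.erase x) t = n + 1 + t := by
    intro t ht; exact enumExt_of_ge (by omega)
  have eaLe : ∀ t, enumExt n (A.erase x) t ≤ enumExt n A (t + 1) := by
    intro t; rw [hxp]; exact enumExt_erase_le hAn hp t
  have hble : ∀ i, i < B.card → enumExt n B i ≤ n := fun i hi => enumExt_le hBn hi
  have hbmono := enumExt_strictMono hBn
  have hbGe : ∀ i, i ≤ j → i < k → enumExt n B i ≤ enumExt n (B.erase y) i := by
    intro i h1 h2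
    rw [eb i (by omega)]
    split_ifs with h
    · exact le_refl _
    · exact (hbmono (Nat.lt_succ_self i)).le
  set c := if j + ℓ < A.card then ℓ else ℓ - 1 with hcdef
  have hpe1 : j + ℓ < A.card → p = j + ℓ := fun h => Nat.mod_eq_of_lt h
  have hpe2 : A.card ≤ j + ℓ → p = j + ℓ - A.card := by
    intro h
    rw [hpdef, Nat.mod_eq_sub_mod h, Nat.mod_eq_of_lt (by omega)]
  have hℓpos2 : A.card ≤ j + ℓ → 1 ≤ ℓ := by intro h; omega
  -- `c` satisfies ShiftOK for the erased sets
  have hSc : ShiftOK n (A.erase x) (B.erase y) c := by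
    intro i hi
    rw [hcA'] at hi
    rcases lt_or_ge (j + ℓ) A.card with hjl | hjl
    · have hpe := hpe1 hjl
      rw [hcdef, if_pos hjl]
      rcases lt_or_ge i j with hij | hij
      · rw [eb i (by omega), if_pos hij]
        rcases lt_or_ge (i + ℓ + 1) A.card with h2 | h2
        · rw [ea (i + ℓ) h2, if_pos (by omega)]
          exact hS i (by omega)
        · rw [eaBig (i + ℓ) (by omega)]
          have := hble i (by omega); omega
      · rw [eb i (by omega), if_neg (by omega)]
        rcases lt_or_ge (i + ℓ + 1) A.card with h2 | h2
        · rw [ea (i + ℓ) h2, if_neg (by omega),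
            show i + ℓ + 1 = i + 1 + ℓ by omega]
          exact hS (i + 1) (by omega)
        · rw [eaBig (i + ℓ) (by omega)]
          have := hble (i + 1) (by omega); omega
    · have hpe := hpe2 hjl
      have hℓ1 := hℓpos2 hjl
      rw [hcdef, if_neg (by omega)]
      rcases lt_or_ge i j with hij | hij
      · rw [eb i (by omega), if_pos hij]
        rcases lt_or_ge (i + (ℓ - 1) + 1) A.card with h2 | h2
        · rw [ea (i + (ℓ - 1)) h2, if_neg (by omega),
            show i + (ℓ - 1) + 1 = i + ℓ by omega]
          exact hS i (by omega)
        · rw [eaBig (i + (ℓ - 1)) (by omega)]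
          have := hble i (by omega); omega
      · rw [eb i (by omega), if_neg (by omega)]
        rw [eaBig (i + (ℓ - 1)) (by omega)]
        have := hble (i + 1) (by omega); omega
  -- minimality of `c`
  have hminc : c = 0 ∨ ¬ ShiftOK n (A.erase x) (B.erase y) (c - 1) := by
    rcases Nat.eq_zero_or_pos c with hc0 | hc0
    · exact Or.inl hc0
    right
    have hℓ1 : 1 ≤ ℓ := by rw [hcdef] at hc0; split_ifs at hc0 <;> omega
    obtain ⟨i0, hi0, hi0r, hi0le⟩ :=
      shiftOK_fail hBn (by omega) (ell_min hBn (by omega) (show ℓ - 1 < ℓ by omega))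
    intro hSh
    rcases lt_or_ge (j + ℓ) A.card with hjl | hjl
    · -- c = ℓ, p = j + ℓ
      have hpe := hpe1 hjl
      have hcℓ : c = ℓ := by rw [hcdef, if_pos hjl]
      rcases le_or_gt i0 j with hij | hij
      · have hi0k : i0 < k := by omega
        have h1 := hSh i0 (by omega)
        rw [ea (i0 + (c - 1)) (by omega), if_pos (by omega),
          show i0 + (c - 1) = i0 + (ℓ - 1) by omega] at h1
        have h2 := hbGe i0 hij hi0k
        omega
      · have h1 := hSh (i0 - 1) (by omega)
        rw [eb (i0 - 1) (by omega), if_neg (by omega),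
          show i0 - 1 + 1 = i0 by omega] at h1
        have h3 : enumExt n (A.erase x) (i0 - 1 + (c - 1)) ≤
            enumExt n A (i0 + (ℓ - 1)) := by
          calc enumExt n (A.erase x) (i0 - 1 + (c - 1)) ≤
              enumExt n A (i0 - 1 + (c - 1) + 1) := eaLe _
            _ ≤ enumExt n A (i0 + (ℓ - 1)) :=
              (enumExt_strictMono hAn).monotone (by omega)
        omega
    · -- c = ℓ - 1, p = j + ℓ - A.card, ℓ ≥ 2
      have hpe := hpe2 hjl
      have hℓ2 : 2 ≤ ℓ := by rw [hcdef, if_neg (by omega)] at hc0; omega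
      have hij : i0 ≤ j := by omega
      have hi0k : i0 < k := by omega
      have h1 := hSh i0 (by omega)
      have h3 : enumExt n (A.erase x) (i0 + (c - 1)) ≤ enumExt n A (i0 + (ℓ - 1)) := by
        calc enumExt n (A.erase x) (i0 + (c - 1)) ≤
            enumExt n A (i0 + (c - 1) + 1) := eaLe _
          _ ≤ enumExt n A (i0 + (ℓ - 1)) := by
            rw [show i0 + (c - 1) + 1 = i0 + (ℓ - 1) by
              rw [hcdef, if_neg (by omega)]; omega]
      have h2 := hbGe i0 hij hi0k
      omega
  have hell' : ell n (A.erase x) (B.erase y) = c := ell_eq hAn' hSc hminc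
  -- index transfer
  have hmem : ∀ i, i < k → ∃ i', i' < A.card ∧
      enumExt n (A.erase x) ((i + c) % k) = enumExt n A ((i' + ℓ) % A.card) ∧
      enumExt n (B.erase y) i = enumExt n B i' := by
    intro i hik
    rcases lt_or_ge (j + ℓ) A.card with hjl | hjl
    · -- case 1 : c = ℓ, p = j + ℓ
      have hpe := hpe1 hjl
      have hcℓ : c = ℓ := by rw [hcdef, if_pos hjl]
      rcases lt_or_ge i j with hij | hij
      · refine ⟨i, by omega, ?_, ?_⟩
        · rw [show (i + c) % k = i + ℓ by rw [hcℓ]; exact Nat.mod_eq_of_lt (by omega),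
            show (i + ℓ) % A.card = i + ℓ from Nat.mod_eq_of_lt (by omega),
            ea (i + ℓ) (by omega), if_pos (by omega)]
        · rw [eb i (by omega), if_pos hij]
      · refine ⟨i + 1, by omega, ?_, ?_⟩
        · rcases lt_or_ge (i + ℓ) k with h2 | h2
          · rw [show (i + c) % k = i + ℓ by rw [hcℓ]; exact Nat.mod_eq_of_lt (by omega),
              show (i + 1 + ℓ) % A.card = i + 1 + ℓ from Nat.mod_eq_of_lt (by omega),
              ea (i + ℓ) (by omega), if_neg (by omega),
              show i + ℓ + 1 = i + 1 + ℓ by omega]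
          · rw [show (i + c) % k = i + ℓ - k by
                rw [hcℓ, Nat.mod_eq_sub_mod (by omega)]
                exact Nat.mod_eq_of_lt (by omega),
              show (i + 1 + ℓ) % A.card = i + ℓ - k by
                rw [Nat.mod_eq_sub_mod (by omega)]
                rw [Nat.mod_eq_of_lt (by omega)]
                omega,
              ea (i + ℓ - k) (by omega), if_pos (by omega)]
        · rw [eb i (by omega), if_neg (by omega)]
    · -- case 2 : c = ℓ - 1, p = j + ℓ - A.card
      have hpe := hpe2 hjl
      have hℓ1 := hℓpos2 hjl
      have hcℓ : c = ℓ - 1 := by rw [hcdef, if_neg (by omega)]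
      rcases lt_or_ge i j with hij | hij
      · refine ⟨i, by omega, ?_, ?_⟩
        · rcases lt_or_ge (i + ℓ) A.card with h2 | h2
          · rw [show (i + c) % k = i + (ℓ - 1) by
                rw [hcℓ]; exact Nat.mod_eq_of_lt (by omega),
              show (i + ℓ) % A.card = i + ℓ from Nat.mod_eq_of_lt (by omega),
              ea (i + (ℓ - 1)) (by omega), if_neg (by omega),
              show i + (ℓ - 1) + 1 = i + ℓ by omega]
          · rw [show (i + c) % k = i + ℓ - 1 - k by
                rw [hcℓ, show i + (ℓ - 1) = i + ℓ - 1 by omega,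
                  Nat.mod_eq_sub_mod (by omega)]
                exact Nat.mod_eq_of_lt (by omega),
              show (i + ℓ) % A.card = i + ℓ - 1 - k by
                rw [Nat.mod_eq_sub_mod (by omega), Nat.mod_eq_of_lt (by omega)]
                omega,
              ea (i + ℓ - 1 - k) (by omega), if_pos (by omega)]
        · rw [eb i (by omega), if_pos hij]
      · refine ⟨i + 1, by omega, ?_, ?_⟩
        · rw [show (i + c) % k = i + ℓ - 1 - k by
              rw [hcℓ, show i + (ℓ - 1) = i + ℓ - 1 by omega,
                Nat.mod_eq_sub_mod (by omega)]
              exact Nat.mod_eq_of_lt (by omega),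
            show (i + 1 + ℓ) % A.card = i + ℓ - k by
              rw [Nat.mod_eq_sub_mod (by omega), Nat.mod_eq_of_lt (by omega)]
              omega,
            ea (i + ℓ - 1 - k) (by omega), if_neg (by omega),
            show i + ℓ - 1 - k + 1 = i + ℓ - k by omega]
        · rw [eb i (by omega), if_neg (by omega)]
  -- conclude
  intro z hz
  simp only [NAB, Finset.mem_image, Finset.mem_range] at hz ⊢
  obtain ⟨i, hik, hzeq⟩ := hz
  rw [hcA'] at hik
  rw [hcA', hell'] at hzeq
  obtain ⟨i', hi', h1, h2⟩ := hmem i hik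
  refine ⟨i', hi', ?_⟩
  rw [← hzeq, Prod.mk.injEq]
  exact ⟨h1.symm, h2.symm⟩
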